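/- arXiv:1407.1067 — 3 statements merged into one kernel-verified Lean document; each statement's English description precedes it below -/
import Mathlib

section
/- Let ρ and σ be states (positive semidefinite d×d complex matrices of trace 1) with supp ρ ⊆ supp σ. Then lim_{α→1, α≠1} (1/(α−1))·log Tr(ρ^α σ^{1−α}) = Tr(ρ(log ρ − log σ)), i.e., the old Rényi α-divergence converges to the Umegaki relative entropy as α → 1. -/
open scoped BigOperators ComplexOrder

/-- Power of a Hermitian matrix taken on its support: eigenvalue 0 maps to 0,
eigenvalue x > 0 maps to x ^ α. Junk value 0 for non-Hermitian matrices. -/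
noncomputable def mPow {d : ℕ} (A : Matrix (Fin d) (Fin d) ℂ) (α : ℝ) :
    Matrix (Fin d) (Fin d) ℂ :=
  if hA : A.IsHermitian then
    (hA.eigenvectorUnitary : Matrix (Fin d) (Fin d) ℂ) *
      Matrix.diagonal (fun i =>
        (((if hA.eigenvalues i = 0 then 0 else hA.eigenvalues i ^ α) : ℝ) : ℂ)) *
      star (hA.eigenvectorUnitary : Matrix (Fin d) (Fin d) ℂ)
  else 0

/-- Logarithm of a Hermitian matrix taken on its support (0 maps to 0). -/
noncomputable def mLog {d : ℕ} (A : Matrix (Fin d) (Fin d) ℂ) :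
    Matrix (Fin d) (Fin d) ℂ :=
  if hA : A.IsHermitian then
    (hA.eigenvectorUnitary : Matrix (Fin d) (Fin d) ℂ) *
      Matrix.diagonal (fun i => ((Real.log (hA.eigenvalues i) : ℝ) : ℂ)) *
      star (hA.eigenvectorUnitary : Matrix (Fin d) (Fin d) ℂ)
  else 0

/-- supp A ⊆ supp B : the range of A is contained in the range of B. -/
def suppLe {d : ℕ} (A B : Matrix (Fin d) (Fin d) ℂ) : Prop :=
  LinearMap.range (Matrix.toLin' A) ≤ LinearMap.range (Matrix.toLin' B)

/-!
Diagonalise `ρ = ∑ aᵢ uᵢuᵢ*` and `σ = ∑ bⱼ vⱼvⱼ*` and put `cᵢⱼ = |⟨uᵢ, vⱼ⟩|²`. Then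
`Tr(ρ^α σ^(1-α)) = ∑ aᵢ^α bⱼ^(1-α) cᵢⱼ =: F(α)`, a differentiable function of `α`: terms with
`aᵢ = 0` vanish, and terms with `aᵢ ≠ 0 = bⱼ` vanish because the support condition forces
`cᵢⱼ = 0`. The `cᵢⱼ` are the squared moduli of the entries of a unitary matrix, so each row
sums to one and `F(1) = Tr ρ = 1`. The limit is therefore the derivative
`(log F)'(1) = F'(1) = ∑ aᵢ (log aᵢ - log bⱼ) cᵢⱼ`, which is `Tr ρ (log ρ - log σ)` written in
the same eigenbases.
-/

open Filter Topology Matrix Real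

noncomputable def supportRpow (x α : ℝ) : ℝ := if x = 0 then 0 else x ^ α

lemma hasDerivAt_supportRpow_mul_supportRpow_one_sub {a b c : ℝ} (ha : 0 ≤ a) (hb : 0 ≤ b)
    (hc : a ≠ 0 → b = 0 → c = 0) :
    HasDerivAt (fun α => supportRpow a α * supportRpow b (1 - α) * c)
      (a * (log a - log b) * c) 1 := by
  rcases ha.eq_or_lt with rfl | ha
  · simpa [supportRpow] using hasDerivAt_const (1 : ℝ) (0 : ℝ)
  rcases hb.eq_or_lt with rfl | hb
  · simpa [hc ha.ne' rfl] using hasDerivAt_const (1 : ℝ) (0 : ℝ)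
  have hrpow := (((hasDerivAt_id' (1 : ℝ)).const_rpow ha).fun_mul
    (((hasDerivAt_id' (1 : ℝ)).const_sub 1).const_rpow hb)).mul_const c
  simp only [supportRpow, ha.ne', hb.ne', if_false]
  refine hrpow.congr_deriv ?_
  simp only [rpow_one, sub_self, rpow_zero]
  ring

lemma supportRpow_mul_supportRpow_one_sub_one {a b c : ℝ} (hc : a ≠ 0 → b = 0 → c = 0) :
    supportRpow a 1 * supportRpow b (1 - 1) * c = a * c := by
  by_cases ha : a = 0
  · simp [supportRpow, ha]
  by_cases hb : b = 0
  · simp [hc ha hb]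
  · simp [supportRpow, ha, hb]

lemma tendsto_inv_sub_mul_log_of_hasDerivAt {f : ℝ → ℝ} {f' x : ℝ} (hf : HasDerivAt f f' x)
    (hfx : f x = 1) :
    Tendsto (fun y => (y - x)⁻¹ * log (f y)) (𝓝[≠] x) (𝓝 f') := by
  have hlog : HasDerivAt (fun y => log (f y)) f' x := by
    simpa [hfx] using hf.log (by simp [hfx])
  refine (hasDerivAt_iff_tendsto_slope.mp hlog).congr fun y => ?_
  simp [slope_def_field, hfx, div_eq_inv_mul]

lemma tendsto_inv_sub_one_mul_log_sum_supportRpow {ι κ : Type*} [Fintype ι] [Fintype κ]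
    {a : ι → ℝ} {b : κ → ℝ} {c : ι → κ → ℝ} (ha : ∀ i, 0 ≤ a i) (hb : ∀ j, 0 ≤ b j)
    (hc : ∀ i j, a i ≠ 0 → b j = 0 → c i j = 0) (hnorm : ∑ i, ∑ j, a i * c i j = 1) :
    Tendsto (fun α => (α - 1)⁻¹ *
        log (∑ i, ∑ j, supportRpow (a i) α * supportRpow (b j) (1 - α) * c i j))
      (𝓝[≠] 1) (𝓝 (∑ i, ∑ j, a i * (log (a i) - log (b j)) * c i j)) := by
  refine tendsto_inv_sub_mul_log_of_hasDerivAt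
    (HasDerivAt.fun_sum fun i _ => HasDerivAt.fun_sum fun j _ =>
      hasDerivAt_supportRpow_mul_supportRpow_one_sub (ha i) (hb j) (hc i j)) ?_
  simp only [supportRpow_mul_supportRpow_one_sub_one (hc _ _), hnorm]

section
variable {n : Type*} [Fintype n] [DecidableEq n]

lemma trace_diagonal_mul_mul_diagonal_mul_star (W : Matrix n n ℂ) (p q : n → ℝ) :
    (diagonal (fun i => (p i : ℂ)) * W * diagonal (fun j => (q j : ℂ)) * star W).trace =
      ((∑ i, ∑ j, p i * q j * Complex.normSq (W i j) : ℝ) : ℂ) := by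
  simp only [trace, diag_apply, mul_apply (M := _ * _ * _), mul_diagonal, diagonal_mul,
    star_apply, Complex.star_def]
  push_cast
  refine Finset.sum_congr rfl fun i _ => Finset.sum_congr rfl fun j _ => ?_
  rw [Complex.normSq_eq_conj_mul_self]
  ring

lemma trace_conj_diagonal_mul_conj_diagonal (U V : Matrix n n ℂ) (p q : n → ℝ) :
    (U * diagonal (fun i => (p i : ℂ)) * star U *
        (V * diagonal (fun j => (q j : ℂ)) * star V)).trace =
      ((∑ i, ∑ j, p i * q j * Complex.normSq ((star U * V) i j) : ℝ) : ℂ) := by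
  rw [← trace_diagonal_mul_mul_diagonal_mul_star, star_mul, star_star,
    Matrix.mul_assoc, Matrix.mul_assoc, trace_mul_comm U]
  simp only [Matrix.mul_assoc]

lemma sum_normSq_apply_of_mem_unitaryGroup {W : Matrix n n ℂ} (hW : W ∈ unitaryGroup n ℂ)
    (i : n) :
    ∑ j, Complex.normSq (W i j) = 1 := by
  have h := congr_fun₂ (mem_unitaryGroup_iff.mp hW) i i
  simp only [mul_apply, star_apply, Complex.star_def, Complex.mul_conj, one_apply_eq] at h
  exact_mod_cast h

variable {A B : Matrix n n ℂ}

/-- `|⟨uᵢ, vⱼ⟩|²` for the eigenbases `u` of `A` and `v` of `B`. -/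
noncomputable def eigenOverlap (hA : A.IsHermitian) (hB : B.IsHermitian) (i j : n) : ℝ :=
  Complex.normSq ((star (hA.eigenvectorUnitary : Matrix n n ℂ) * hB.eigenvectorUnitary) i j)

lemma sum_eigenOverlap_right (hA : A.IsHermitian) (hB : B.IsHermitian) (i : n) :
    ∑ j, eigenOverlap hA hB i j = 1 :=
  sum_normSq_apply_of_mem_unitaryGroup
    (star hA.eigenvectorUnitary * hB.eigenvectorUnitary).2 i

lemma eigenOverlap_self (hA : A.IsHermitian) (i j : n) :
    eigenOverlap hA hA i j = if i = j then 1 else 0 := by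
  simp [eigenOverlap, one_apply, apply_ite]

end

section
variable {d : ℕ} {A B : Matrix (Fin d) (Fin d) ℂ}

lemma eigenOverlap_eq_zero_of_suppLe (hA : A.IsHermitian) (hB : B.IsHermitian)
    (hAB : suppLe A B)
    {i j : Fin d} (hi : hA.eigenvalues i ≠ 0) (hj : hB.eigenvalues j = 0) :
    eigenOverlap hA hB i j = 0 := by
  set u : Fin d → ℂ := ⇑(hA.eigenvectorBasis i)
  set v : Fin d → ℂ := ⇑(hB.eigenvectorBasis j)
  obtain ⟨w, hw⟩ : u ∈ LinearMap.range (toLin' B) := hAB ⟨(hA.eigenvalues i)⁻¹ • u, by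
    rw [toLin'_apply, mulVec_smul, hA.mulVec_eigenvectorBasis i, smul_smul, inv_mul_cancel₀ hi,
      one_smul]⟩
  have hv : B *ᵥ v = 0 := by rw [hB.mulVec_eigenvectorBasis j, hj, zero_smul]
  have huv : star u ⬝ᵥ v = 0 := by
    rw [← hw, toLin'_apply, star_mulVec, ← dotProduct_mulVec, hB.eq, hv, dotProduct_zero]
  simp [eigenOverlap, mul_apply, ← huv, dotProduct, u, v]

lemma mPow_of_isHermitian (hA : A.IsHermitian) (α : ℝ) :
    mPow A α = (hA.eigenvectorUnitary : Matrix (Fin d) (Fin d) ℂ) *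
      diagonal (fun i => (supportRpow (hA.eigenvalues i) α : ℂ)) *
      star (hA.eigenvectorUnitary : Matrix (Fin d) (Fin d) ℂ) :=
  dif_pos hA

lemma mLog_of_isHermitian (hA : A.IsHermitian) :
    mLog A = (hA.eigenvectorUnitary : Matrix (Fin d) (Fin d) ℂ) *
      diagonal (fun i => (log (hA.eigenvalues i) : ℂ)) *
      star (hA.eigenvectorUnitary : Matrix (Fin d) (Fin d) ℂ) :=
  dif_pos hA

lemma trace_mPow_mul_mPow (hA : A.IsHermitian) (hB : B.IsHermitian) (α β : ℝ) :
    (mPow A α * mPow B β).trace = ((∑ i, ∑ j, supportRpow (hA.eigenvalues i) α *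
      supportRpow (hB.eigenvalues j) β * eigenOverlap hA hB i j : ℝ) : ℂ) := by
  rw [mPow_of_isHermitian hA, mPow_of_isHermitian hB]
  exact trace_conj_diagonal_mul_conj_diagonal _ _ _ _

lemma trace_mul_mLog (hA : A.IsHermitian) (hB : B.IsHermitian) :
    (A * mLog B).trace = ((∑ i, ∑ j, hA.eigenvalues i * log (hB.eigenvalues j) *
      eigenOverlap hA hB i j : ℝ) : ℂ) := by
  conv_lhs => rw [hA.spectral_theorem, Unitary.conjStarAlgAut_apply, mLog_of_isHermitian hB]
  exact trace_conj_diagonal_mul_conj_diagonal _ _ _ _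

lemma re_trace_mul_sub_mLog (hA : A.IsHermitian) (hB : B.IsHermitian) :
    (A * (mLog A - mLog B)).trace.re = ∑ i, ∑ j, hA.eigenvalues i *
      (log (hA.eigenvalues i) - log (hB.eigenvalues j)) * eigenOverlap hA hB i j := by
  have hself : ∑ i, ∑ j, hA.eigenvalues i * log (hA.eigenvalues j) * eigenOverlap hA hA i j =
      ∑ i, ∑ j, hA.eigenvalues i * log (hA.eigenvalues i) * eigenOverlap hA hB i j := by
    simp [eigenOverlap_self, ← Finset.mul_sum, sum_eigenOverlap_right]
  rw [Matrix.mul_sub, trace_sub, trace_mul_mLog hA hA, trace_mul_mLog hA hB,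
    ← Complex.ofReal_sub, Complex.ofReal_re, hself]
  simp only [← Finset.sum_sub_distrib]
  refine Finset.sum_congr rfl fun i _ => Finset.sum_congr rfl fun j _ => ?_
  ring

end

theorem Dold_tendsto_relativeEntropy_general {d : ℕ}
    (ρ σ : Matrix (Fin d) (Fin d) ℂ)
    (hρ : ρ.PosSemidef) (hσ : σ.PosSemidef)
    (hρ1 : ρ.trace = 1)
    (hsupp : suppLe ρ σ) :
    Filter.Tendsto
      (fun α : ℝ => (α - 1)⁻¹ * Real.log (((mPow ρ α * mPow σ (1 - α)).trace).re))
      (nhdsWithin 1 {(1 : ℝ)}ᶜ)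
      (nhds (((ρ * (mLog ρ - mLog σ)).trace).re)) := by
  have hnorm : ∑ i, ∑ j, hρ.1.eigenvalues i * eigenOverlap hρ.1 hσ.1 i j = 1 := by
    simp only [← Finset.mul_sum, sum_eigenOverlap_right, mul_one]
    simpa using congrArg Complex.re (hρ.1.trace_eq_sum_eigenvalues.symm.trans hρ1)
  rw [re_trace_mul_sub_mLog hρ.1 hσ.1]
  refine (tendsto_inv_sub_one_mul_log_sum_supportRpow hρ.eigenvalues_nonneg
    hσ.eigenvalues_nonneg (fun i j => eigenOverlap_eq_zero_of_suppLe hρ.1 hσ.1 hsupp)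
    hnorm).congr fun α => ?_
  rw [trace_mPow_mul_mPow, Complex.ofReal_re]

theorem Dold_tendsto_relativeEntropy {d : ℕ} (hd : 1 ≤ d)
    (ρ σ : Matrix (Fin d) (Fin d) ℂ)
    (hρ : ρ.PosSemidef) (hσ : σ.PosSemidef)
    (hρ1 : ρ.trace = 1) (hσ1 : σ.trace = 1)
    (hsupp : suppLe ρ σ) :
    Filter.Tendsto
      (fun α : ℝ => (α - 1)⁻¹ * Real.log (((mPow ρ α * mPow σ (1 - α)).trace).re))
      (nhdsWithin 1 {(1 : ℝ)}ᶜ)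
      (nhds (((ρ * (mLog ρ - mLog σ)).trace).re)) :=
  Dold_tendsto_relativeEntropy_general ρ σ hρ hσ hρ1 hsupp
end

section
/- Let ρ and σ be positive semidefinite d×d complex matrices and α ∈ (0,1). Then Tr((ρ^{1/2} σ^{(1−α)/α} ρ^{1/2})^α) ≤ ‖σ‖^{(1−α)²} · (Tr(ρ^α))^{1−α} · (Tr(ρ^α σ^{1−α}))^α, where ‖σ‖ is the operator norm (largest eigenvalue) of σ. -/
open scoped BigOperators ComplexOrder

/-- The operator norm (largest singular value) of a matrix, via the action on
Euclidean space. -/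
noncomputable def opNorm {d : ℕ} (A : Matrix (Fin d) (Fin d) ℂ) : ℝ :=
  ‖Matrix.toEuclideanCLM (𝕜 := ℂ) A‖

/-!
Put `Z = ρ^{1/2} σ^{(1-α)/α} ρ^{1/2}`, with eigenvalues `zᵢ`, and let `aⱼ` be the eigenvalues of
`ρ`. The squared overlaps `Cⱼᵢ = |⟨uⱼ, vᵢ⟩|²` of the two eigenbases form a doubly stochastic
matrix, and `Cⱼᵢ = 0` whenever `aⱼ = 0 ≠ zᵢ` because `supp Z ⊆ supp ρ`. Weighted Hölder with
exponent `1/α`, weights `Cⱼᵢ aⱼ^α` and values `(zᵢ / aⱼ)^α` gives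
`Tr Z^α ≤ (Tr ρ^α)^{1-α} (Tr ρ^{α-1} Z)^α`. By cyclicity `Tr ρ^{α-1} Z = Tr ρ^α σ^{(1-α)/α}`,
and `x^{(1-α)/α} ≤ ‖σ‖^{(1-α)²/α} x^{1-α}` on the spectrum of `σ`.
-/

noncomputable def powSupp (s x : ℝ) : ℝ := if x = 0 then 0 else x ^ s

section powSupp

variable {s t x : ℝ}

@[simp]
lemma powSupp_apply_zero (s : ℝ) : powSupp s 0 = 0 := if_pos rfl

lemma powSupp_of_ne_zero (hx : x ≠ 0) : powSupp s x = x ^ s := if_neg hx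

lemma powSupp_eq_rpow (hs : s ≠ 0) (hx : 0 ≤ x) : powSupp s x = x ^ s := by
  rcases eq_or_ne x 0 with rfl | hx0
  · rw [powSupp_apply_zero, Real.zero_rpow hs]
  · exact powSupp_of_ne_zero hx0

lemma powSupp_nonneg (hx : 0 ≤ x) : 0 ≤ powSupp s x := by
  unfold powSupp
  split_ifs
  exacts [le_rfl, Real.rpow_nonneg hx s]

lemma powSupp_mul_powSupp (hx : 0 ≤ x) : powSupp s x * powSupp t x = powSupp (s + t) x := by
  rcases hx.eq_or_lt with rfl | hx
  · simp
  · simp only [powSupp_of_ne_zero hx.ne', Real.rpow_add hx]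

lemma powSupp_add_le_rpow_mul_powSupp {N : ℝ} (ht : 0 ≤ t) (hx : 0 ≤ x) (hxN : x ≤ N) :
    powSupp (s + t) x ≤ N ^ t * powSupp s x := by
  rcases hx.eq_or_lt with rfl | hx
  · simp
  · rw [powSupp_of_ne_zero hx.ne', powSupp_of_ne_zero hx.ne', Real.rpow_add hx, mul_comm]
    gcongr

end powSupp

theorem sum_powSupp_le_of_doublyStochastic {ι κ : Type*} [Fintype ι] [Fintype κ] {α : ℝ}
    (hα0 : 0 < α) (hα1 : α ≤ 1) {a : ι → ℝ} {z : κ → ℝ} {C : ι → κ → ℝ}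
    (ha : ∀ j, 0 ≤ a j) (hz : ∀ i, 0 ≤ z i) (hC : ∀ j i, 0 ≤ C j i)
    (hcol : ∀ i, ∑ j, C j i = 1) (hrow : ∀ j, ∑ i, C j i = 1)
    (hsupp : ∀ j i, a j = 0 → z i ≠ 0 → C j i = 0) :
    ∑ i, powSupp α (z i) ≤
      (∑ j, powSupp α (a j)) ^ (1 - α) * (∑ j, ∑ i, powSupp (α - 1) (a j) * z i * C j i) ^ α := by
  let w : ι × κ → ℝ := fun p => C p.1 p.2 * a p.1 ^ α
  let f : ι × κ → ℝ := fun p => (z p.2 / a p.1) ^ α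
  have hwf : ∀ p, w p * f p = C p.1 p.2 * powSupp α (z p.2) := by
    rintro ⟨j, i⟩
    rcases (ha j).eq_or_lt with hj | hj
    · rcases eq_or_ne (z i) 0 with hi | hi
      · simp [w, f, hi, Real.zero_rpow hα0.ne']
      · simp [w, f, hsupp j i hj.symm hi]
    · simp only [w, f, powSupp_eq_rpow hα0.ne' (hz i), Real.div_rpow (hz i) hj.le]
      field_simp [(Real.rpow_pos_of_pos hj α).ne']
  have hwfp : ∀ p, w p * f p ^ α⁻¹ = powSupp (α - 1) (a p.1) * z p.2 * C p.1 p.2 := by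
    rintro ⟨j, i⟩
    rcases (ha j).eq_or_lt with hj | hj
    · simp [w, f, ← hj, Real.zero_rpow hα0.ne']
    · simp only [w, f, Real.rpow_rpow_inv (div_nonneg (hz i) hj.le) hα0.ne',
        powSupp_of_ne_zero hj.ne', Real.rpow_sub_one hj.ne']
      field_simp
  have hw : ∑ p, w p = ∑ j, powSupp α (a j) := by
    simp only [w, Fintype.sum_prod_type, ← Finset.sum_mul, hrow, one_mul,
      powSupp_eq_rpow hα0.ne' (ha _)]
  have holder := Real.inner_le_weight_mul_Lp_of_nonneg Finset.univ (one_le_inv₀ hα0 |>.mpr hα1)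
    w f (fun p => mul_nonneg (hC _ _) (Real.rpow_nonneg (ha _) _))
    (fun p => Real.rpow_nonneg (div_nonneg (hz _) (ha _)) _)
  simp only [hwf, hwfp, hw, inv_inv, Fintype.sum_prod_type] at holder
  calc ∑ i, powSupp α (z i) = ∑ j, ∑ i, C j i * powSupp α (z i) := by
        simp only [Finset.sum_comm (γ := ι), ← Finset.sum_mul, hcol, one_mul]
    _ ≤ _ := holder

namespace Matrix

open scoped MatrixOrder

variable {n : Type*} [Fintype n] [DecidableEq n]

lemma sum_norm_sq_apply_right_of_mem_unitaryGroup {U : Matrix n n ℂ}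
    (hU : U ∈ unitaryGroup n ℂ) (i : n) : ∑ j, ‖U i j‖ ^ 2 = 1 := by
  have h := congrFun (congrFun (mem_unitaryGroup_iff.mp hU) i) i
  simp only [mul_apply, star_apply, one_apply_eq, RCLike.star_def, Complex.mul_conj,
    Complex.normSq_eq_norm_sq] at h
  exact_mod_cast h

lemma sum_norm_sq_apply_left_of_mem_unitaryGroup {U : Matrix n n ℂ}
    (hU : U ∈ unitaryGroup n ℂ) (j : n) : ∑ i, ‖U i j‖ ^ 2 = 1 := by
  simpa [star_apply] using
    sum_norm_sq_apply_right_of_mem_unitaryGroup (Unitary.star_mem hU) j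

namespace IsHermitian

variable {A B Z : Matrix n n ℂ}

lemma cfc_eq_eigenvectorUnitary_mul (hA : A.IsHermitian) (f : ℝ → ℝ) :
    cfc f A = (hA.eigenvectorUnitary : Matrix n n ℂ) *
      diagonal (fun i => (f (hA.eigenvalues i) : ℂ)) *
        star (hA.eigenvectorUnitary : Matrix n n ℂ) := by
  rw [hA.cfc_eq, IsHermitian.cfc, Unitary.conjStarAlgAut_apply]
  rfl

lemma trace_cfc (hA : A.IsHermitian) (f : ℝ → ℝ) :
    (cfc f A).trace = ((∑ i, f (hA.eigenvalues i) : ℝ) : ℂ) := by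
  rw [hA.cfc_eq_eigenvectorUnitary_mul, trace_mul_cycle, Unitary.coe_star_mul_self, one_mul,
    trace_diagonal, Complex.ofReal_sum]

/-- `eigenOverlap hA hB j k = |⟨uⱼ, vₖ⟩|²` for the eigenbases `(uⱼ)` of `A` and `(vₖ)` of `B`. -/
noncomputable def eigenOverlap (hA : A.IsHermitian) (hB : B.IsHermitian) (j k : n) : ℝ :=
  ‖(star (hA.eigenvectorUnitary : Matrix n n ℂ) * hB.eigenvectorUnitary) j k‖ ^ 2

lemma sum_eigenOverlap_left (hA : A.IsHermitian) (hB : B.IsHermitian) (k : n) :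
    ∑ j, eigenOverlap hA hB j k = 1 :=
  sum_norm_sq_apply_left_of_mem_unitaryGroup
    (mul_mem (Unitary.star_mem hA.eigenvectorUnitary.2) hB.eigenvectorUnitary.2) k

lemma sum_eigenOverlap_right (hA : A.IsHermitian) (hB : B.IsHermitian) (j : n) :
    ∑ k, eigenOverlap hA hB j k = 1 :=
  sum_norm_sq_apply_right_of_mem_unitaryGroup
    (mul_mem (Unitary.star_mem hA.eigenvectorUnitary.2) hB.eigenvectorUnitary.2) j

lemma trace_cfc_mul_cfc (hA : A.IsHermitian) (hB : B.IsHermitian) (f g : ℝ → ℝ) :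
    (cfc f A * cfc g B).trace = ((∑ j, ∑ k,
      f (hA.eigenvalues j) * g (hB.eigenvalues k) * eigenOverlap hA hB j k : ℝ) : ℂ) := by
  set U := (hA.eigenvectorUnitary : Matrix n n ℂ)
  set W := star U * hB.eigenvectorUnitary
  set Df := diagonal (fun j => (f (hA.eigenvalues j) : ℂ))
  set Dg := diagonal (fun k => (g (hB.eigenvalues k) : ℂ))
  have hconj : cfc f A * cfc g B = U * (Df * W * Dg * star W) * star U := by
    rw [hA.cfc_eq_eigenvectorUnitary_mul, hB.cfc_eq_eigenvectorUnitary_mul]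
    simp only [W, Df, Dg, U, star_mul, star_star, Matrix.mul_assoc,
      Unitary.mul_star_self_of_mem hA.eigenvectorUnitary.2, Matrix.mul_one]
  rw [hconj, trace_mul_cycle, Unitary.coe_star_mul_self, Matrix.one_mul, trace]
  push_cast
  refine Finset.sum_congr rfl fun j _ => ?_
  rw [diag, mul_apply]
  refine Finset.sum_congr rfl fun k _ => ?_
  simp only [Df, Dg, mul_diagonal, diagonal_mul, star_apply, eigenOverlap, W, RCLike.star_def]
  rw [← Complex.normSq_eq_norm_sq, ← Complex.mul_conj]
  ring

lemma re_trace_cfc_mul_cfc_le (hA : A.IsHermitian) (hB : B.IsHermitian) {f g h : ℝ → ℝ} {c : ℝ}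
    (hf : ∀ j, 0 ≤ f (hA.eigenvalues j))
    (hgh : ∀ k, g (hB.eigenvalues k) ≤ c * h (hB.eigenvalues k)) :
    (cfc f A * cfc g B).trace.re ≤ c * (cfc f A * cfc h B).trace.re := by
  simp only [trace_cfc_mul_cfc hA hB, Complex.ofReal_re, Finset.mul_sum]
  refine Finset.sum_le_sum fun j _ => Finset.sum_le_sum fun k _ => ?_
  calc f (hA.eigenvalues j) * g (hB.eigenvalues k) * eigenOverlap hA hB j k
      ≤ f (hA.eigenvalues j) * (c * h (hB.eigenvalues k)) * eigenOverlap hA hB j k := by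
        gcongr
        exacts [sq_nonneg _, hf j, hgh k]
    _ = _ := by ring

lemma re_trace_cfc_mul_cfc_nonneg (hA : A.IsHermitian) (hB : B.IsHermitian) {f g : ℝ → ℝ}
    (hf : ∀ j, 0 ≤ f (hA.eigenvalues j)) (hg : ∀ k, 0 ≤ g (hB.eigenvalues k)) :
    0 ≤ (cfc f A * cfc g B).trace.re := by
  rw [trace_cfc_mul_cfc hA hB, Complex.ofReal_re]
  exact Finset.sum_nonneg fun j _ => Finset.sum_nonneg fun k _ =>
    mul_nonneg (mul_nonneg (hf j) (hg k)) (sq_nonneg _)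

lemma eigenOverlap_eq_zero_of_eq_cfc_mul (hA : A.IsHermitian) (hZ : Z.IsHermitian) {f : ℝ → ℝ}
    {Y : Matrix n n ℂ} (hZA : Z = cfc f A * Y) {j i : n} (hj : f (hA.eigenvalues j) = 0)
    (hi : hZ.eigenvalues i ≠ 0) : eigenOverlap hA hZ j i = 0 := by
  set U := (hA.eigenvectorUnitary : Matrix n n ℂ)
  set V := (hZ.eigenvectorUnitary : Matrix n n ℂ)
  have hZV : Z * V = V * diagonal (fun k => (hZ.eigenvalues k : ℂ)) := by
    conv_lhs => rw [← cfc_id' ℝ Z, hZ.cfc_eq_eigenvectorUnitary_mul]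
    rw [Matrix.mul_assoc, Unitary.coe_star_mul_self, Matrix.mul_one]
  have hrow : (star U * Z * V) j i = 0 := by
    rw [hZA, hA.cfc_eq_eigenvectorUnitary_mul]
    simp only [Matrix.mul_assoc]
    rw [← Matrix.mul_assoc (star U) U, Unitary.coe_star_mul_self, Matrix.one_mul, diagonal_mul,
      hj, Complex.ofReal_zero, zero_mul]
  rw [Matrix.mul_assoc, hZV, ← Matrix.mul_assoc, mul_diagonal] at hrow
  change ‖(star U * V) j i‖ ^ 2 = 0
  rw [(mul_eq_zero.mp hrow).resolve_right (by exact_mod_cast hi), norm_zero, sq, zero_mul]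

lemma eigenvalues_le_opNorm {d : ℕ} {A : Matrix (Fin d) (Fin d) ℂ} (hA : A.IsHermitian)
    (k : Fin d) : hA.eigenvalues k ≤ opNorm A := by
  set v := hA.eigenvectorBasis k
  have hv : ‖v‖ = 1 := hA.eigenvectorBasis.orthonormal.1 k
  have hAv : toEuclideanCLM (𝕜 := ℂ) A v = (hA.eigenvalues k : ℂ) • v := by
    apply WithLp.ofLp_injective 2
    rw [ofLp_toEuclideanCLM, WithLp.ofLp_smul, hA.mulVec_eigenvectorBasis k]
    ext m
    simp [v]
  calc hA.eigenvalues k ≤ ‖toEuclideanCLM (𝕜 := ℂ) A v‖ := by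
        rw [hAv, norm_smul, hv, mul_one, Complex.norm_real]
        exact Real.le_norm_self _
    _ ≤ opNorm A * ‖v‖ := (toEuclideanCLM (𝕜 := ℂ) A).le_opNorm v
    _ = opNorm A := by rw [hv, mul_one]

end IsHermitian

namespace PosSemidef

variable {A B Z : Matrix n n ℂ}

lemma cfc_powSupp (hA : A.PosSemidef) (s : ℝ) : (cfc (powSupp s) A).PosSemidef :=
  nonneg_iff_posSemidef.mp <| cfc_nonneg fun _ hx =>
    powSupp_nonneg (spectrum_nonneg_of_nonneg hA.nonneg hx)

lemma cfc_powSupp_mul_cfc_powSupp (hA : A.PosSemidef) (s t : ℝ) :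
    cfc (powSupp s) A * cfc (powSupp t) A = cfc (powSupp (s + t)) A := by
  rw [← cfc_mul _ _ A (A.finite_real_spectrum.continuousOn _)
    (A.finite_real_spectrum.continuousOn _)]
  exact cfc_congr fun _ hx => powSupp_mul_powSupp (spectrum_nonneg_of_nonneg hA.nonneg hx)

theorem re_trace_cfc_powSupp_le (hA : A.PosSemidef) (hZ : Z.PosSemidef) {f : ℝ → ℝ}
    (hf : f 0 = 0) {Y : Matrix n n ℂ} (hZA : Z = cfc f A * Y) {α : ℝ} (hα0 : 0 < α)
    (hα1 : α ≤ 1) :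
    (cfc (powSupp α) Z).trace.re ≤
      (cfc (powSupp α) A).trace.re ^ (1 - α) * (cfc (powSupp (α - 1)) A * Z).trace.re ^ α := by
  conv_rhs => rw [← cfc_id' ℝ Z hZ.1.isSelfAdjoint]
  rw [hZ.1.trace_cfc, hA.1.trace_cfc, hA.1.trace_cfc_mul_cfc hZ.1]
  simp only [Complex.ofReal_re]
  exact sum_powSupp_le_of_doublyStochastic hα0 hα1 hA.eigenvalues_nonneg hZ.eigenvalues_nonneg
    (fun _ _ => sq_nonneg _) (IsHermitian.sum_eigenOverlap_left _ _)
    (IsHermitian.sum_eigenOverlap_right _ _) fun _ _ hj hi =>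
      IsHermitian.eigenOverlap_eq_zero_of_eq_cfc_mul hA.1 hZ.1 hZA (by rw [hj, hf]) hi

lemma trace_cfc_powSupp_mul_sandwich (hA : A.PosSemidef) (r s t : ℝ) (B : Matrix n n ℂ) :
    (cfc (powSupp s) A * (cfc (powSupp r) A * B * cfc (powSupp t) A)).trace =
      (cfc (powSupp (r + s + t)) A * B).trace := by
  rw [← mul_assoc, trace_mul_comm, ← mul_assoc, ← mul_assoc, hA.cfc_powSupp_mul_cfc_powSupp,
    hA.cfc_powSupp_mul_cfc_powSupp, show t + s + r = r + s + t by ring]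

lemma re_trace_cfc_powSupp_mul_cfc_powSupp_nonneg (hA : A.PosSemidef) (hB : B.PosSemidef)
    (r s : ℝ) : 0 ≤ (cfc (powSupp r) A * cfc (powSupp s) B).trace.re :=
  hA.1.re_trace_cfc_mul_cfc_nonneg hB.1 (fun _ => powSupp_nonneg (hA.eigenvalues_nonneg _))
    fun _ => powSupp_nonneg (hB.eigenvalues_nonneg _)

lemma re_trace_cfc_powSupp_mul_cfc_powSupp_add_le {d : ℕ} {A B : Matrix (Fin d) (Fin d) ℂ}
    (hA : A.PosSemidef) (hB : B.PosSemidef) (r s : ℝ) {t : ℝ} (ht : 0 ≤ t) :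
    (cfc (powSupp r) A * cfc (powSupp (s + t)) B).trace.re ≤
      opNorm B ^ t * (cfc (powSupp r) A * cfc (powSupp s) B).trace.re :=
  hA.1.re_trace_cfc_mul_cfc_le hB.1 (fun _ => powSupp_nonneg (hA.eigenvalues_nonneg _)) fun k =>
    powSupp_add_le_rpow_mul_powSupp ht (hB.eigenvalues_nonneg k) (hB.1.eigenvalues_le_opNorm k)

end PosSemidef

end Matrix

lemma mPow_eq_cfc {d : ℕ} {A : Matrix (Fin d) (Fin d) ℂ} (hA : A.IsHermitian) (s : ℝ) :
    mPow A s = cfc (powSupp s) A := by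
  rw [mPow, dif_pos hA, hA.cfc_eq_eigenvectorUnitary_mul]
  rfl

theorem audenaert_converse_alt_general {d : ℕ}
    (ρ σ : Matrix (Fin d) (Fin d) ℂ)
    (hρ : ρ.PosSemidef) (hσ : σ.PosSemidef)
    {α : ℝ} (hα : α ∈ Set.Ioo (0 : ℝ) 1) :
    ((mPow (mPow ρ (1/2) * mPow σ ((1 - α)/α) * mPow ρ (1/2)) α).trace).re ≤
      opNorm σ ^ ((1 - α) ^ 2) * (((mPow ρ α).trace).re) ^ (1 - α) *
        (((mPow ρ α * mPow σ (1 - α)).trace).re) ^ α := by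
  obtain ⟨hα0, hα1⟩ := hα
  simp only [mPow_eq_cfc hρ.1, mPow_eq_cfc hσ.1]
  set S := cfc (powSupp (1 / 2)) ρ
  set B := cfc (powSupp ((1 - α) / α)) σ
  have hZ : (S * B * S).PosSemidef := by
    have hSBS := (hσ.cfc_powSupp ((1 - α) / α)).conjTranspose_mul_mul_same S
    rwa [(hρ.cfc_powSupp (1 / 2)).1.eq] at hSBS
  rw [mPow_eq_cfc hZ.1]
  have hholder := hρ.re_trace_cfc_powSupp_le hZ (powSupp_apply_zero (1 / 2)) (mul_assoc S B S)
    hα0 hα1.le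
  rw [hρ.trace_cfc_powSupp_mul_sandwich, show 1 / 2 + (α - 1) + 1 / 2 = α by ring] at hholder
  have hbound := hρ.re_trace_cfc_powSupp_mul_cfc_powSupp_add_le hσ α (1 - α)
    (t := (1 - α) ^ 2 / α) (by positivity)
  rw [show 1 - α + (1 - α) ^ 2 / α = (1 - α) / α by field_simp; ring] at hbound
  have hN : 0 ≤ opNorm σ := norm_nonneg _
  have hL : 0 ≤ (cfc (powSupp α) ρ).trace.re :=
    (Complex.nonneg_iff.mp (hρ.cfc_powSupp α).trace_nonneg).1
  have hK := hρ.re_trace_cfc_powSupp_mul_cfc_powSupp_nonneg hσ α (1 - α)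
  calc _ ≤ _ := hholder
    _ ≤ (cfc (powSupp α) ρ).trace.re ^ (1 - α) * (opNorm σ ^ ((1 - α) ^ 2 / α) *
          (cfc (powSupp α) ρ * cfc (powSupp (1 - α)) σ).trace.re) ^ α :=
        mul_le_mul_of_nonneg_left (Real.rpow_le_rpow
          (hρ.re_trace_cfc_powSupp_mul_cfc_powSupp_nonneg hσ _ _) hbound hα0.le)
          (Real.rpow_nonneg hL _)
    _ = _ := by
        rw [Real.mul_rpow (Real.rpow_nonneg hN _) hK, ← Real.rpow_mul hN,
          div_mul_cancel₀ _ hα0.ne']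
        ring

theorem audenaert_converse_alt {d : ℕ} (hd : 1 ≤ d)
    (ρ σ : Matrix (Fin d) (Fin d) ℂ)
    (hρ : ρ.PosSemidef) (hσ : σ.PosSemidef)
    {α : ℝ} (hα : α ∈ Set.Ioo (0 : ℝ) 1) :
    ((mPow (mPow ρ (1/2) * mPow σ ((1 - α)/α) * mPow ρ (1/2)) α).trace).re ≤
      opNorm σ ^ ((1 - α) ^ 2) * (((mPow ρ α).trace).re) ^ (1 - α) *
        (((mPow ρ α * mPow σ (1 - α)).trace).re) ^ α :=
  audenaert_converse_alt_general ρ σ hρ hσ hα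
end

section
/- Let ρ and σ be states (positive semidefinite d×d complex matrices of trace 1) with Tr(ρ^α σ^{1−α}) > 0, let ε ∈ (0,1) and α ∈ (0,1). Then β_ε(ρ‖σ) ≤ exp(−D_α^old(ρ‖σ) + (α/(1−α))·log(1/ε) − h₂(α)/(1−α)), where h₂(α) := −α·log α − (1−α)·log(1−α) is the binary entropy function. -/
open scoped BigOperators ComplexOrder

/-- The old (Petz-type) Rényi α-divergence of states. -/
noncomputable def Dold {d : ℕ} (ρ σ : Matrix (Fin d) (Fin d) ℂ) (α : ℝ) : ℝ :=
  (α - 1)⁻¹ * Real.log (((mPow ρ α * mPow σ (1 - α)).trace).re)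

/-- The optimal type II error for testing ω against τ with the type I error
bounded by ε. -/
noncomputable def betaErr {d : ℕ} (ε : ℝ) (ω τ : Matrix (Fin d) (Fin d) ℂ) : ℝ :=
  sInf {x : ℝ | ∃ T : Matrix (Fin d) (Fin d) ℂ,
    T.PosSemidef ∧ (1 - T).PosSemidef ∧
    ((ω * (1 - T)).trace).re ≤ ε ∧ x = ((τ * T).trace).re}

/-!
For every multiplier `γ > 0`, Audenaert's inequality applied to `ρ` and `γ • σ` gives a test `T`
with `Tr ρ(1 - T) + γ Tr σT ≤ γ ^ (1 - α) Tr ρ ^ α σ ^ (1 - α)`, and by weighted AM–GM the right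
side is at most `ε + γ B`, where `B` is the claimed bound. The achievable pairs of error
probabilities form a convex set, so a Lagrangian bound that holds for every `γ` yields a single
test with type I error at most `ε` and type II error arbitrarily close to `B`.

Audenaert's inequality itself follows from the operator monotonicity of `t ↦ t ^ s` for
`0 ≤ s ≤ 1`, applied to `A, B ≤ B + (A - B)⁺`; the test is the projection onto the positive
eigenspace of `A - B`.
-/

-- The L2 operator norm makes square complex matrices a C⋆-algebra, which brings Mathlib's
-- operator monotonicity of `CFC.rpow` to matrices in the Loewner order.
open scoped MatrixOrder Matrix.Norms.L2Operator
open Set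

section CStarAlgebra

variable {𝒜 : Type*} [CStarAlgebra 𝒜] [PartialOrder 𝒜] [StarOrderedRing 𝒜]

lemma CFC.rpow_mul_rpow_one_sub {a : 𝒜} (ha : 0 ≤ a) {s : ℝ} (hs : s ∈ Ioo (0 : ℝ) 1) :
    a ^ s * a ^ (1 - s) = a := by
  rw [CFC.rpow_eq_cfc_real ha, CFC.rpow_eq_cfc_real ha,
    ← cfc_mul _ _ a (Real.continuous_rpow_const hs.1.le).continuousOn
      (Real.continuous_rpow_const (sub_nonneg.2 hs.2.le)).continuousOn]
  conv_rhs => rw [← cfc_id' ℝ a]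
  refine cfc_congr fun x hx => ?_
  rcases (spectrum_nonneg_of_nonneg ha hx).eq_or_lt with rfl | hx0
  · simp [Real.zero_rpow hs.1.ne']
  · rw [← Real.rpow_add hx0, add_sub_cancel, Real.rpow_one]

lemma CFC.smul_rpow {a : 𝒜} (ha : 0 ≤ a) {r : ℝ} (hr : 0 ≤ r) {y : ℝ} (hy : 0 ≤ y) :
    (r • a) ^ y = r ^ y • a ^ y := by
  have hcont : Continuous (fun x : ℝ => x ^ y) := Real.continuous_rpow_const hy
  rw [CFC.rpow_eq_cfc_real (smul_nonneg hr ha), CFC.rpow_eq_cfc_real ha,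
    ← cfc_smul (r ^ y) _ a hcont.continuousOn, ← cfc_comp_smul r _ a hcont.continuousOn]
  exact cfc_congr fun x hx => Real.mul_rpow hr (spectrum_nonneg_of_nonneg ha hx)

end CStarAlgebra

namespace Matrix

variable {n : Type*} [Fintype n] [DecidableEq n]

lemma re_trace_mul_nonneg {A B : Matrix n n ℂ} (hA : 0 ≤ A) (hB : 0 ≤ B) :
    0 ≤ (A * B).trace.re := by
  obtain ⟨S, rfl⟩ := CStarAlgebra.nonneg_iff_eq_star_mul_self.mp hA
  have h := (nonneg_iff_posSemidef.mp (star_left_conjugate_nonneg hB (star S))).trace_nonneg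
  rw [star_star, trace_mul_cycle] at h
  exact (Complex.nonneg_iff.mp h).1

lemma re_trace_mul_le_re_trace_mul {A B B' : Matrix n n ℂ} (hA : 0 ≤ A) (hB : B ≤ B') :
    (A * B).trace.re ≤ (A * B').trace.re := by
  have h := re_trace_mul_nonneg hA (sub_nonneg.2 hB)
  rwa [Matrix.mul_sub, trace_sub, Complex.sub_re, sub_nonneg] at h

lemma exists_mul_eq_posPart {D : Matrix n n ℂ} (hD : IsSelfAdjoint D) :
    ∃ T : Matrix n n ℂ, 0 ≤ T ∧ T ≤ 1 ∧ D * T = D⁺ := by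
  have hcont : ∀ f : ℝ → ℝ, ContinuousOn f (spectrum ℝ D) :=
    fun f => D.finite_real_spectrum.continuousOn f
  refine ⟨cfc (fun x : ℝ => if 0 < x then 1 else 0) D, cfc_nonneg fun x _ => ?_,
    cfc_le_one _ D fun x _ => ?_, ?_⟩
  · split_ifs <;> norm_num
  · split_ifs <;> norm_num
  · nth_rw 1 [← cfc_id' ℝ D]
    rw [CFC.posPart_def, cfcₙ_eq_cfc, ← cfc_mul _ _ D (hcont _) (hcont _)]
    refine cfc_congr fun x _ => ?_
    split_ifs with hx
    · simp [hx.le]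
    · simp [posPart_eq_zero.2 (not_lt.1 hx)]

lemma re_trace_add_sub_le_re_trace_rpow_mul_rpow {A B C : Matrix n n ℂ} (hA : 0 ≤ A)
    (hB : 0 ≤ B) (hAC : A ≤ C) (hBC : B ≤ C) {s : ℝ} (hs : s ∈ Ioo (0 : ℝ) 1) :
    A.trace.re + B.trace.re - C.trace.re ≤ (A ^ s * B ^ (1 - s)).trace.re := by
  have hs₀ : s ∈ Icc (0 : ℝ) 1 := Ioo_subset_Icc_self hs
  have hs₁ : 1 - s ∈ Icc (0 : ℝ) 1 := ⟨sub_nonneg.2 hs.2.le, by linarith [hs.1]⟩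
  have hC : 0 ≤ C := hA.trans hAC
  have h1 : ((C ^ s - A ^ s) * B ^ (1 - s)).trace.re ≤
      ((C ^ s - A ^ s) * C ^ (1 - s)).trace.re :=
    re_trace_mul_le_re_trace_mul (sub_nonneg.2 (CFC.rpow_le_rpow hs₀ hAC))
      (CFC.rpow_le_rpow hs₁ hBC)
  have h2 : (A ^ s * A ^ (1 - s)).trace.re ≤ (A ^ s * C ^ (1 - s)).trace.re :=
    re_trace_mul_le_re_trace_mul CFC.rpow_nonneg (CFC.rpow_le_rpow hs₁ hAC)
  have h3 : (B ^ (1 - s) * B ^ s).trace.re ≤ (B ^ (1 - s) * C ^ s).trace.re :=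
    re_trace_mul_le_re_trace_mul CFC.rpow_nonneg (CFC.rpow_le_rpow hs₀ hBC)
  rw [CFC.rpow_mul_rpow_one_sub hA hs] at h2
  rw [trace_mul_comm, CFC.rpow_mul_rpow_one_sub hB hs, trace_mul_comm] at h3
  rw [Matrix.sub_mul, Matrix.sub_mul, trace_sub, trace_sub, Complex.sub_re, Complex.sub_re,
    CFC.rpow_mul_rpow_one_sub hC hs] at h1
  linarith

/-- Audenaert's inequality, the achievability half of the quantum Chernoff bound. -/
lemma exists_test_re_trace_le_re_trace_rpow_mul_rpow {A B : Matrix n n ℂ} (hA : 0 ≤ A)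
    (hB : 0 ≤ B) {s : ℝ} (hs : s ∈ Ioo (0 : ℝ) 1) :
    ∃ T : Matrix n n ℂ, 0 ≤ T ∧ T ≤ 1 ∧
      (A * (1 - T)).trace.re + (B * T).trace.re ≤ (A ^ s * B ^ (1 - s)).trace.re := by
  have hD : IsSelfAdjoint (A - B) := hA.isSelfAdjoint.sub hB.isSelfAdjoint
  obtain ⟨T, hT0, hT1, hDT⟩ := exists_mul_eq_posPart hD
  refine ⟨T, hT0, hT1, ?_⟩
  have hAC : A ≤ B + (A - B)⁺ := sub_le_iff_le_add'.mp (CFC.le_posPart hD)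
  have key := re_trace_add_sub_le_re_trace_rpow_mul_rpow hA hB hAC
    (le_add_of_nonneg_right (CFC.posPart_nonneg _)) hs
  rw [← hDT, trace_add, Complex.add_re, Matrix.sub_mul, trace_sub, Complex.sub_re] at key
  rw [Matrix.mul_sub, Matrix.mul_one, trace_sub, Complex.sub_re]
  linarith

end Matrix

namespace Convex

variable {K : Set (ℝ × ℝ)} {ε B : ℝ}

lemma exists_fst_le_snd_le_of_straddle (hK : Convex ℝ K) {p q : ℝ × ℝ} (hp : p ∈ K)
    (hq : q ∈ K) (hp0 : 0 ≤ p.1) (hpε : p.1 ≤ ε) (hqε : ε < q.1) {γ γ' : ℝ} (hγ : 0 < γ)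
    (hγγ' : γ ≤ γ') (hpγ : p.1 + γ * p.2 ≤ ε + γ * B) (hqγ' : q.1 + γ' * q.2 ≤ ε + γ' * B) :
    ∃ r ∈ K, r.1 ≤ ε ∧ r.2 ≤ B + ε * (γ⁻¹ - γ'⁻¹) := by
  have hpq : 0 < q.1 - p.1 := by linarith
  have hγ' : 0 < γ' := hγ.trans_le hγγ'
  set a := (q.1 - ε) / (q.1 - p.1)
  set b := (ε - p.1) / (q.1 - p.1)
  have ha : 0 ≤ a := div_nonneg (by linarith) hpq.le
  have hb : 0 ≤ b := div_nonneg (by linarith) hpq.le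
  have hab : a + b = 1 := by rw [← add_div, div_eq_one_iff_eq hpq.ne']; ring
  refine ⟨a • p + b • q, hK hp hq ha hb hab, ?_, ?_⟩
  · simp only [Prod.fst_add, Prod.smul_fst, smul_eq_mul, a, b]
    field_simp
    linarith
  · have hw : b * (q.1 - ε) = a * (ε - p.1) := by simp only [a, b]; ring
    have hp2 : p.2 ≤ B + (ε - p.1) * γ⁻¹ := by
      rw [← mul_le_mul_iff_right₀ hγ, mul_add, mul_left_comm, mul_inv_cancel₀ hγ.ne', mul_one]
      linarith
    have hq2 : q.2 ≤ B - (q.1 - ε) * γ'⁻¹ := by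
      rw [← mul_le_mul_iff_right₀ hγ', mul_sub, mul_left_comm, mul_inv_cancel₀ hγ'.ne', mul_one]
      linarith
    have hwε : a * (ε - p.1) ≤ ε := by nlinarith
    have hinv : 0 ≤ γ⁻¹ - γ'⁻¹ := sub_nonneg.2 (inv_anti₀ hγ hγγ')
    simp only [Prod.snd_add, Prod.smul_snd, smul_eq_mul]
    calc a * p.2 + b * q.2 ≤ a * (B + (ε - p.1) * γ⁻¹) + b * (B - (q.1 - ε) * γ'⁻¹) := by
          gcongr
      _ = B + a * (ε - p.1) * (γ⁻¹ - γ'⁻¹) := by linear_combination B * hab - γ'⁻¹ * hw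
      _ ≤ B + ε * (γ⁻¹ - γ'⁻¹) := by gcongr

lemma exists_fst_le_snd_le_add (hK : Convex ℝ K) (hK0 : ∀ p ∈ K, 0 ≤ p.1) {c : ℝ}
    (hc : (0, c) ∈ K) (hε : 0 < ε) (hlag : ∀ γ > 0, ∃ p ∈ K, p.1 + γ * p.2 ≤ ε + γ * B)
    {δ : ℝ} (hδ : 0 < δ) : ∃ p ∈ K, p.1 ≤ ε ∧ p.2 ≤ B + δ := by
  set S := {γ : ℝ | 0 < γ ∧ ∃ p ∈ K, p.1 ≤ ε ∧ p.1 + γ * p.2 ≤ ε + γ * B}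
  have hS : ∀ γ ∈ S, ∃ p ∈ K, p.1 ≤ ε ∧ p.2 ≤ B + ε * γ⁻¹ := by
    rintro γ ⟨hγ, p, hp, hpε, hpγ⟩
    refine ⟨p, hp, hpε, ?_⟩
    rw [← mul_le_mul_iff_right₀ hγ, mul_add, mul_left_comm, mul_inv_cancel₀ hγ.ne', mul_one]
    linarith [hK0 p hp]
  have hS0 : ε / (|c - B| + 1) ∈ S := by
    have hpos : 0 < |c - B| + 1 := by positivity
    refine ⟨div_pos hε hpos, (0, c), hc, hε.le, ?_⟩
    have : ε / (|c - B| + 1) * (c - B) ≤ ε := by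
      rw [div_mul_eq_mul_div, div_le_iff₀ hpos]
      nlinarith [le_abs_self (c - B)]
    simp only
    linarith
  by_cases hbdd : BddAbove S
  · -- Mix a point of the constraint set found just below `sSup S` with one violating the
    -- constraint just above it.
    set s := sSup S
    have hs : 0 < s := hS0.1.trans_le (le_csSup hbdd hS0)
    obtain ⟨η, hη, hηs⟩ := Metric.eventually_nhds_iff.mp
      ((show ContinuousAt (fun γ : ℝ => ε * γ⁻¹) s from
        continuousAt_const.mul (continuousAt_inv₀ hs.ne')).eventually
        (Metric.ball_mem_nhds (ε * s⁻¹) (half_pos hδ)))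
    obtain ⟨γ, hγS, hγ⟩ := exists_lt_of_lt_csSup ⟨_, hS0⟩ (sub_lt_self s hη)
    have hγs : γ ≤ s := le_csSup hbdd hγS
    obtain ⟨hγ0, p, hp, hpε, hpγ⟩ := hγS
    obtain ⟨q, hq, hqγ'⟩ := hlag (s + η / 2) (by positivity)
    have hqε : ε < q.1 := by
      by_contra! hqε
      have := le_csSup hbdd ⟨by positivity, q, hq, hqε, hqγ'⟩
      linarith
    obtain ⟨r, hr, hrε, hrB⟩ := hK.exists_fst_le_snd_le_of_straddle hp hq (hK0 p hp) hpε hqε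
      hγ0 (by linarith) hpγ hqγ'
    refine ⟨r, hr, hrε, hrB.trans ?_⟩
    have h1 := hηs (show dist γ s < η by rw [Real.dist_eq, abs_lt]; constructor <;> linarith)
    have h2 := hηs (show dist (s + η / 2) s < η by
      rw [Real.dist_eq, add_sub_cancel_left, abs_of_pos (half_pos hη)]; exact half_lt_self hη)
    simp only [Real.dist_eq, abs_lt] at h1 h2
    linarith
  · obtain ⟨γ, hγS, hγ⟩ := not_bddAbove_iff.mp hbdd (ε / δ)
    obtain ⟨p, hp, hpε, hpB⟩ := hS γ hγS
    refine ⟨p, hp, hpε, hpB.trans ?_⟩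
    rw [add_le_add_iff_left, ← div_eq_mul_inv, div_le_iff₀ hγS.1]
    rw [div_lt_iff₀ hδ] at hγ
    linarith

end Convex

open Real in
lemma rpow_one_sub_mul_le_add_mul_exp {Q ε α γ : ℝ} (hQ : 0 < Q) (hε : 0 < ε)
    (hα : α ∈ Ioo (0 : ℝ) 1) (hγ : 0 < γ) :
    γ ^ (1 - α) * Q ≤ ε + γ * exp (-((α - 1)⁻¹ * log Q) + α / (1 - α) * log ε⁻¹
      - (-(α * log α) - (1 - α) * log (1 - α)) / (1 - α)) := by
  obtain ⟨hα0, hα1⟩ := hα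
  have h1α : 0 < 1 - α := sub_pos.2 hα1
  set B := exp (-((α - 1)⁻¹ * log Q) + α / (1 - α) * log ε⁻¹
    - (-(α * log α) - (1 - α) * log (1 - α)) / (1 - α))
  have hgm : (ε / α) ^ α * (γ * B / (1 - α)) ^ (1 - α) = γ ^ (1 - α) * Q := by
    rw [rpow_def_of_pos (by positivity), rpow_def_of_pos (by positivity), rpow_def_of_pos hγ,
      ← exp_log hQ, ← exp_add, ← exp_add, log_div hε.ne' hα0.ne', log_div (by positivity) h1α.ne',
      log_mul hγ.ne' (exp_pos _).ne', log_exp, log_inv]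
    have : α - 1 ≠ 0 := by linarith
    congr 1
    field_simp
    ring
  calc γ ^ (1 - α) * Q = (ε / α) ^ α * (γ * B / (1 - α)) ^ (1 - α) := hgm.symm
    _ ≤ α * (ε / α) + (1 - α) * (γ * B / (1 - α)) :=
      geom_mean_le_arith_mean2_weighted hα0.le h1α.le (by positivity) (by positivity) (by ring)
    _ = ε + γ * B := by field_simp

section TestErrors

variable {n : Type*} [Fintype n] [DecidableEq n]

def testErrors (ρ σ : Matrix n n ℂ) : Set (ℝ × ℝ) :=
  {p | ∃ T : Matrix n n ℂ, 0 ≤ T ∧ T ≤ 1 ∧ p = ((ρ * (1 - T)).trace.re, (σ * T).trace.re)}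

lemma convex_testErrors (ρ σ : Matrix n n ℂ) : Convex ℝ (testErrors ρ σ) := by
  rintro _ ⟨T, hT0, hT1, rfl⟩ _ ⟨T', hT0', hT1', rfl⟩ a b ha hb hab
  obtain ⟨h0, h1⟩ := convex_Icc (0 : Matrix n n ℂ) 1 ⟨hT0, hT1⟩ ⟨hT0', hT1'⟩ ha hb hab
  refine ⟨a • T + b • T', h0, h1, ?_⟩
  have h1 : (1 : Matrix n n ℂ) - (a • T + b • T') = a • (1 - T) + b • (1 - T') := by
    nth_rw 1 [← one_smul ℝ (1 : Matrix n n ℂ), ← hab]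
    module
  simp [Matrix.mul_add, h1]

lemma fst_nonneg_of_mem_testErrors {ρ σ : Matrix n n ℂ} (hρ : 0 ≤ ρ) {p : ℝ × ℝ}
    (hp : p ∈ testErrors ρ σ) : 0 ≤ p.1 := by
  obtain ⟨T, -, hT1, rfl⟩ := hp
  exact Matrix.re_trace_mul_nonneg hρ (sub_nonneg.2 hT1)

lemma zero_re_trace_mem_testErrors (ρ σ : Matrix n n ℂ) : (0, σ.trace.re) ∈ testErrors ρ σ :=
  ⟨1, zero_le_one, le_rfl, by simp⟩

lemma exists_mem_testErrors_fst_add_mul_snd_le {ρ σ : Matrix n n ℂ} (hρ : 0 ≤ ρ) (hσ : 0 ≤ σ)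
    {α γ : ℝ} (hα : α ∈ Ioo (0 : ℝ) 1) (hγ : 0 < γ) :
    ∃ p ∈ testErrors ρ σ, p.1 + γ * p.2 ≤ γ ^ (1 - α) * (ρ ^ α * σ ^ (1 - α)).trace.re := by
  obtain ⟨T, hT0, hT1, hT⟩ :=
    Matrix.exists_test_re_trace_le_re_trace_rpow_mul_rpow hρ (smul_nonneg hγ.le hσ) hα
  refine ⟨_, ⟨T, hT0, hT1, rfl⟩, ?_⟩
  rwa [CFC.smul_rpow hσ hγ.le (sub_nonneg.2 hα.2.le), mul_smul_comm, Matrix.trace_smul,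
    smul_mul_assoc, Matrix.trace_smul, Complex.smul_re, Complex.smul_re, smul_eq_mul,
    smul_eq_mul] at hT
end TestErrors

lemma mPow_eq_rpow {d : ℕ} {A : Matrix (Fin d) (Fin d) ℂ} (hA : 0 ≤ A) {s : ℝ} (hs : s ≠ 0) :
    mPow A s = A ^ s := by
  have hA' := (Matrix.nonneg_iff_posSemidef.mp hA).isHermitian
  rw [CFC.rpow_eq_cfc_real hA, hA'.cfc_eq, mPow, dif_pos hA', Matrix.IsHermitian.cfc]
  congr 3
  ext i
  split_ifs with h <;> simp [h, Real.zero_rpow hs]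

lemma betaErr_le_of_mem_testErrors {d : ℕ} {ε : ℝ} {ρ σ : Matrix (Fin d) (Fin d) ℂ} (hσ : 0 ≤ σ)
    {p : ℝ × ℝ} (hp : p ∈ testErrors ρ σ) (hpε : p.1 ≤ ε) : betaErr ε ρ σ ≤ p.2 := by
  obtain ⟨T, hT0, hT1, rfl⟩ := hp
  refine csInf_le ⟨0, ?_⟩ ⟨T, Matrix.nonneg_iff_posSemidef.mp hT0, Matrix.le_iff.mp hT1, hpε, rfl⟩
  rintro _ ⟨T', hT', -, -, rfl⟩
  exact Matrix.re_trace_mul_nonneg hσ (Matrix.nonneg_iff_posSemidef.mpr hT')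

theorem betaErr_upper_bound_general {d : ℕ}
    (ρ σ : Matrix (Fin d) (Fin d) ℂ)
    (hρ : ρ.PosSemidef) (hσ : σ.PosSemidef)
    {ε α : ℝ} (hε : ε ∈ Set.Ioo (0 : ℝ) 1) (hα : α ∈ Set.Ioo (0 : ℝ) 1)
    (hQ : 0 < ((mPow ρ α * mPow σ (1 - α)).trace).re) :
    betaErr ε ρ σ ≤ Real.exp (- Dold ρ σ α + α / (1 - α) * Real.log ε⁻¹
      - (- (α * Real.log α) - (1 - α) * Real.log (1 - α)) / (1 - α)) := by
  rw [Dold]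
  rw [mPow_eq_rpow hρ.nonneg hα.1.ne', mPow_eq_rpow hσ.nonneg (sub_pos.2 hα.2).ne'] at hQ ⊢
  refine le_of_forall_pos_le_add fun δ hδ => ?_
  obtain ⟨p, hp, hpε, hpB⟩ := (convex_testErrors ρ σ).exists_fst_le_snd_le_add
    (fun _ => fst_nonneg_of_mem_testErrors hρ.nonneg) (zero_re_trace_mem_testErrors ρ σ) hε.1
    (fun γ hγ => (exists_mem_testErrors_fst_add_mul_snd_le hρ.nonneg hσ.nonneg hα hγ).imp
      fun _ ⟨hp, hpγ⟩ => ⟨hp, hpγ.trans (rpow_one_sub_mul_le_add_mul_exp hQ hε.1 hα hγ)⟩) hδ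
  exact (betaErr_le_of_mem_testErrors hσ.nonneg hp hpε).trans hpB

theorem betaErr_upper_bound {d : ℕ} (hd : 1 ≤ d)
    (ρ σ : Matrix (Fin d) (Fin d) ℂ)
    (hρ : ρ.PosSemidef) (hσ : σ.PosSemidef)
    (hρ1 : ρ.trace = 1) (hσ1 : σ.trace = 1)
    {ε α : ℝ} (hε : ε ∈ Set.Ioo (0 : ℝ) 1) (hα : α ∈ Set.Ioo (0 : ℝ) 1)
    (hQ : 0 < ((mPow ρ α * mPow σ (1 - α)).trace).re) :
    betaErr ε ρ σ ≤ Real.exp (- Dold ρ σ α + α / (1 - α) * Real.log ε⁻¹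
      - (- (α * Real.log α) - (1 - α) * Real.log (1 - α)) / (1 - α)) :=
  betaErr_upper_bound_general ρ σ hρ hσ hε hα hQ
end
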